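/- If Φ = {φ_i}_{i=1}^M is an equiangular Parseval frame for F^N and Ψ = {ψ_i}_{i=1}^M is any Parseval frame for F^N, then ∑_{i≠j} |⟨ψ_i,ψ_j⟩| ≤ ∑_{i≠j} |⟨φ_i,φ_j⟩|; that is, equiangular Parseval frames maximize total coherence. -/

import Mathlib

open Matrix Finset

noncomputable def totalCoherence {N M : ℕ} (Φ : Matrix (Fin N) (Fin M) ℂ) : ℝ :=
  ∑ i, ∑ j ∈ Finset.univ.erase i, ‖(Φᴴ * Φ) i j‖

/-!
The Gram matrix `G = Ψᴴ Ψ` of a Parseval frame is an orthogonal projection of trace `N`, so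
`∑ᵢⱼ |Gᵢⱼ|² = N`. The diagonal part `∑ᵢ |Gᵢᵢ|²` is at least `N² / M` by Cauchy–Schwarz, with
equality for equal norm frames; hence the off-diagonal sum of squares is largest for an equal norm
Parseval frame. A second Cauchy–Schwarz bounds the total coherence by `√(M(M-1))` times the square
root of that sum, and equiangularity is exactly the equality case.
-/

section Finset
variable {ι M : Type*} [Fintype ι] [DecidableEq ι] [AddCommMonoid M]

lemma sum_sum_erase_eq_sum_offDiag (f : ι → ι → M) :
    ∑ i, ∑ j ∈ univ.erase i, f i j = ∑ p ∈ univ.offDiag, f p.1 p.2 :=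
  (Finset.sum_finset_product' _ univ (fun i => univ.erase i) fun p => by
    simp [Finset.mem_offDiag, ne_comm]).symm

lemma sum_sum_eq_sum_diag_add_sum_offDiag (f : ι → ι → M) :
    ∑ i, ∑ j, f i j = ∑ i, f i i + ∑ p ∈ univ.offDiag, f p.1 p.2 := by
  rw [← Finset.sum_product', ← Finset.diag_union_offDiag,
    Finset.sum_union (Finset.disjoint_diag_offDiag _), Finset.sum_diag]

end Finset

lemma sq_sum_eq_card_mul_sum_sq_of_forall_eq {ι : Type*} {s : Finset ι} {f : ι → ℝ} {c : ℝ}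
    (h : ∀ i ∈ s, f i = c) : (∑ i ∈ s, f i) ^ 2 = #s * ∑ i ∈ s, f i ^ 2 := by
  rw [Finset.sum_congr rfl h, Finset.sum_congr rfl fun i hi => congrArg (· ^ 2) (h i hi)]
  simp only [Finset.sum_const, nsmul_eq_mul]
  ring

section Gram
variable {𝕜 m n : Type*} [RCLike 𝕜] [Fintype m] [Fintype n] [DecidableEq m]
  {X : Matrix m n 𝕜}

lemma trace_conjTranspose_mul_self_of_mul_conjTranspose_eq_one (hX : X * Xᴴ = 1) :
    (Xᴴ * X).trace = Fintype.card m := by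
  rw [trace_mul_comm, hX, trace_one]

-- `Xᴴ X` is a self-adjoint idempotent, so its squared Frobenius norm equals its trace.
lemma sum_norm_sq_conjTranspose_mul_self_of_mul_conjTranspose_eq_one (hX : X * Xᴴ = 1) :
    ∑ i, ∑ j, ‖(Xᴴ * X) i j‖ ^ 2 = Fintype.card m := by
  set G := Xᴴ * X
  have hG_idem : G * G = G := by
    simp only [G, Matrix.mul_assoc, ← Matrix.mul_assoc X, hX, Matrix.one_mul]
  have hG_herm : Gᴴ = G := by
    rw [conjTranspose_mul, conjTranspose_conjTranspose]
  have hG_entry : ∀ i j, G i j * G j i = (‖G i j‖ ^ 2 : ℝ) := fun i j => by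
    rw [← congrFun₂ hG_herm j i, conjTranspose_apply, RCLike.star_def, RCLike.mul_conj,
      RCLike.ofReal_pow]
  have htrace : (G * G).trace = ((∑ i, ∑ j, ‖G i j‖ ^ 2 : ℝ) : 𝕜) := by
    simp only [trace, diag_apply, mul_apply, hG_entry, RCLike.ofReal_sum]
  rw [hG_idem, trace_conjTranspose_mul_self_of_mul_conjTranspose_eq_one hX] at htrace
  exact_mod_cast htrace.symm

lemma card_sq_le_card_mul_sum_norm_sq_diag (hX : X * Xᴴ = 1) :
    (Fintype.card m : ℝ) ^ 2 ≤ Fintype.card n * ∑ i, ‖(Xᴴ * X) i i‖ ^ 2 := by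
  have htrace : (Fintype.card m : ℝ) ≤ ∑ i, ‖(Xᴴ * X) i i‖ := by
    rw [← RCLike.norm_natCast (K := 𝕜),
      ← trace_conjTranspose_mul_self_of_mul_conjTranspose_eq_one hX]
    exact norm_sum_le _ _
  calc (Fintype.card m : ℝ) ^ 2 ≤ (∑ i, ‖(Xᴴ * X) i i‖) ^ 2 := by gcongr
    _ ≤ Fintype.card n * ∑ i, ‖(Xᴴ * X) i i‖ ^ 2 := sq_sum_le_card_mul_sum_sq

lemma card_mul_sum_norm_sq_diag_of_forall_diag_eq [Nonempty n] (hX : X * Xᴴ = 1)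
    (hdiag : ∀ i j, (Xᴴ * X) i i = (Xᴴ * X) j j) :
    Fintype.card n * ∑ i, ‖(Xᴴ * X) i i‖ ^ 2 = (Fintype.card m : ℝ) ^ 2 := by
  obtain ⟨k⟩ := ‹Nonempty n›
  have hcard : (Fintype.card m : ℝ) = Fintype.card n * ‖(Xᴴ * X) k k‖ := by
    rw [← RCLike.norm_natCast (K := 𝕜),
      ← trace_conjTranspose_mul_self_of_mul_conjTranspose_eq_one hX]
    simp [trace, hdiag _ k]
  simp only [hdiag _ k, sum_const, card_univ, nsmul_eq_mul, hcard]
  ring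

lemma sum_norm_sq_diag_le_of_forall_diag_eq {Y : Matrix m n 𝕜} (hX : X * Xᴴ = 1)
    (hY : Y * Yᴴ = 1) (hYdiag : ∀ i j, (Yᴴ * Y) i i = (Yᴴ * Y) j j) :
    ∑ i, ‖(Yᴴ * Y) i i‖ ^ 2 ≤ ∑ i, ‖(Xᴴ * X) i i‖ ^ 2 := by
  rcases isEmpty_or_nonempty n with _ | _
  · simp
  refine le_of_mul_le_mul_left ?_ (Nat.cast_pos.2 Fintype.card_pos : (0 : ℝ) < Fintype.card n)
  rw [card_mul_sum_norm_sq_diag_of_forall_diag_eq hY hYdiag]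
  exact card_sq_le_card_mul_sum_norm_sq_diag hX

lemma sum_offDiag_norm_sq_le_of_forall_diag_eq [DecidableEq n] {Y : Matrix m n 𝕜}
    (hX : X * Xᴴ = 1) (hY : Y * Yᴴ = 1) (hYdiag : ∀ i j, (Yᴴ * Y) i i = (Yᴴ * Y) j j) :
    ∑ p ∈ univ.offDiag, ‖(Xᴴ * X) p.1 p.2‖ ^ 2 ≤ ∑ p ∈ univ.offDiag, ‖(Yᴴ * Y) p.1 p.2‖ ^ 2 := by
  have hXsplit := sum_norm_sq_conjTranspose_mul_self_of_mul_conjTranspose_eq_one hX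
  have hYsplit := sum_norm_sq_conjTranspose_mul_self_of_mul_conjTranspose_eq_one hY
  rw [sum_sum_eq_sum_diag_add_sum_offDiag] at hXsplit hYsplit
  linarith [sum_norm_sq_diag_le_of_forall_diag_eq hX hY hYdiag]

end Gram

lemma totalCoherence_eq_sum_offDiag {N M : ℕ} (Φ : Matrix (Fin N) (Fin M) ℂ) :
    totalCoherence Φ = ∑ p ∈ univ.offDiag, ‖(Φᴴ * Φ) p.1 p.2‖ :=
  sum_sum_erase_eq_sum_offDiag _

theorem equiangular_maximizes_totalCoherence {N M : ℕ}
    (Φ Ψ : Matrix (Fin N) (Fin M) ℂ)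
    (hΦ : Φ * Φᴴ = 1)
    (hEqualNorm : ∀ i j, (Φᴴ * Φ) i i = (Φᴴ * Φ) j j)
    (hEquiangular : ∃ c : ℝ, ∀ i j, i ≠ j → ‖(Φᴴ * Φ) i j‖ = c)
    (hΨ : Ψ * Ψᴴ = 1) :
    totalCoherence Ψ ≤ totalCoherence Φ := by
  obtain ⟨c, hc⟩ := hEquiangular
  have hΦ_offDiag : ∀ p ∈ univ.offDiag, ‖(Φᴴ * Φ) p.1 p.2‖ = c :=
    fun p hp => hc _ _ (mem_offDiag.1 hp).2.2
  rw [totalCoherence_eq_sum_offDiag, totalCoherence_eq_sum_offDiag]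
  refine (pow_le_pow_iff_left₀ (by positivity) (by positivity) two_ne_zero).1 ?_
  calc (∑ p ∈ univ.offDiag, ‖(Ψᴴ * Ψ) p.1 p.2‖) ^ 2
      ≤ #univ.offDiag * ∑ p ∈ univ.offDiag, ‖(Ψᴴ * Ψ) p.1 p.2‖ ^ 2 := sq_sum_le_card_mul_sum_sq
    _ ≤ #univ.offDiag * ∑ p ∈ univ.offDiag, ‖(Φᴴ * Φ) p.1 p.2‖ ^ 2 :=
      mul_le_mul_of_nonneg_left (sum_offDiag_norm_sq_le_of_forall_diag_eq hΨ hΦ hEqualNorm)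
        (Nat.cast_nonneg _)
    _ = (∑ p ∈ univ.offDiag, ‖(Φᴴ * Φ) p.1 p.2‖) ^ 2 :=
      (sq_sum_eq_card_mul_sum_sq_of_forall_eq hΦ_offDiag).symm
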